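/- Individual rationality and seller protection of the Greedy-RP mechanism: for every family of bids B, every winner j ∈ W(B) pays a price p_j with ô(d_j) ≤ p_j ≤ v_j (the payment is at least the bundle reserve price and at most the declared valuation), and every non-winner pays p_j = 0. -/

import Mathlib

open Classical Finset

noncomputable section

/-- A bundle: requested amounts of each of the `k` VM types. -/
abbrev Bundle (k : ℕ) := Fin k → ℕ

/-- A bid: a bundle together with a declared valuation. -/
abbrev Bid (k : ℕ) := Bundle k × ℝ

/-- A bundle is nonzero if some coordinate is positive. -/
def nonzeroBundle {k : ℕ} (d : Bundle k) : Prop := ∃ i, 0 < d i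

/-- A valid bid requests a nonzero bundle and declares a nonnegative valuation. -/
def validBid {k : ℕ} (b : Bid k) : Prop := nonzeroBundle b.1 ∧ 0 ≤ b.2

/-- The weighted bundle size `d̂(d) = Σ_i (d i)·(f i)`. -/
def dhat {k : ℕ} (f : Fin k → ℝ) (d : Bundle k) : ℝ := ∑ i, (d i : ℝ) * f i

/-- The bundle reserve price `ô(d) = Σ_i (d i)·(o i)`. -/
def ohat {k : ℕ} (o : Fin k → ℝ) (d : Bundle k) : ℝ := ∑ i, (d i : ℝ) * o i

/-- The bid density `e(d, v) = v / (d̂ d)^q`. -/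
def density {k : ℕ} (f : Fin k → ℝ) (q : ℝ) (b : Bid k) : ℝ := b.2 / (dhat f b.1) ^ q

/-- The indices of the active set `A`, sorted in non-increasing order of bid density;
`mergeSort` is stable and `A.sort (· ≤ ·)` lists indices increasingly, so ties are
broken by smaller index first. -/
def sortedBids {k n : ℕ} (f : Fin k → ℝ) (q : ℝ) (B : Fin n → Bid k) (A : Finset (Fin n)) :
    List (Fin n) :=
  (A.sort (· ≤ ·)).mergeSort (fun i j => decide (density f q (B j) ≤ density f q (B i)))

/-- Greedy-RP allocation scheme (GRP-A) run on the active index set `A`: process the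
indices in non-increasing density order and grant an index whenever both the available
resource constraint (ARC) and the reserve price constraint (RPC) hold. -/
def grants {k n : ℕ} (o f : Fin k → ℝ) (s : Fin k → ℕ) (q : ℝ) (B : Fin n → Bid k)
    (A : Finset (Fin n)) : Finset (Fin n) :=
  (sortedBids f q B A).foldl
    (fun W j =>
      if (∀ i, (B j).1 i + ∑ j' ∈ W, (B j').1 i ≤ s i) ∧ ohat o (B j).1 ≤ (B j).2
      then insert j W else W) ∅

/-- `W(B)`: the winners of GRP-A run on all bids. -/
def winners {k n : ℕ} (o f : Fin k → ℝ) (s : Fin k → ℕ) (q : ℝ) (B : Fin n → Bid k) :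
    Finset (Fin n) :=
  grants o f s q B Finset.univ

/-- `W'_j = W(B_{-j}) \ W(B)`: the new winners once bid `j` is removed. -/
def competitorSet {k n : ℕ} (o f : Fin k → ℝ) (s : Fin k → ℕ) (q : ℝ) (B : Fin n → Bid k)
    (j : Fin n) : Finset (Fin n) :=
  grants o f s q B (Finset.univ.erase j) \ winners o f s q B

/-- The competitor density `e_j^comp`: the maximum density over `W'_j`, or `0` if
`W'_j` is empty. -/
def ecomp {k n : ℕ} (o f : Fin k → ℝ) (s : Fin k → ℕ) (q : ℝ) (B : Fin n → Bid k)
    (j : Fin n) : ℝ :=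
  if h : (competitorSet o f s q B j).Nonempty
  then (competitorSet o f s q B j).sup' h (fun i => density f q (B i))
  else 0

/-- The bid-specific reserve density `e_res(b) = ô(d)/(d̂ d)^q`. -/
def eres {k : ℕ} (o f : Fin k → ℝ) (q : ℝ) (b : Bid k) : ℝ := ohat o b.1 / (dhat f b.1) ^ q

/-- Greedy-RP pricing scheme (GRP-P): a winner `j` pays
`p_j = max(e_j^comp, e_res(b_j)) · (d̂ d_j)^q`; a non-winner pays `0`. -/
def payment {k n : ℕ} (o f : Fin k → ℝ) (s : Fin k → ℕ) (q : ℝ) (B : Fin n → Bid k)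
    (j : Fin n) : ℝ :=
  if j ∈ winners o f s q B
  then max (ecomp o f s q B j) (eres o f q (B j)) * (dhat f (B j).1) ^ q
  else 0

/-! A winner satisfies the reserve-price constraint, so `e_res(b_j) ≤ e(b_j)`, which gives
`ô(d_j) ≤ p_j ≤ v_j` once `e_j^comp ≤ e(b_j)` is known. For the latter, note that GRP-A processes
the bids along a strict total order (density, then index), so the processing order of `B_{-j}` is
that of `B` with `j` deleted. A bid of larger density than `j` is processed before `j` in both
runs, after the same prefix, so it is granted in one run iff it is granted in the other: no bid of
`W(B_{-j}) \ W(B)` is denser than `b_j`. -/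

namespace List

theorem Nodup.eq_of_pair_sublist_of_pair_sublist {α : Type*} {l : List α} (hl : l.Nodup)
    {a b : α} (hab : [a, b] <+ l) (hba : [b, a] <+ l) : a = b := by
  induction l with
  | nil => simp at hab
  | cons c t ih =>
    rw [nodup_cons] at hl
    simp only [sublist_cons_iff, cons.injEq] at hab hba
    grind [Sublist.subset]

end List

theorem dhat_pos {k : ℕ} {f : Fin k → ℝ} (hf : ∀ i, 0 < f i) {d : Bundle k}
    (hd : nonzeroBundle d) : 0 < dhat f d := by
  obtain ⟨i, hi⟩ := hd
  exact sum_pos' (fun i _ => mul_nonneg (Nat.cast_nonneg _) (hf i).le)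
    ⟨i, mem_univ i, mul_pos (Nat.cast_pos.2 hi) (hf i)⟩

section SortedBids

open List

variable {k n : ℕ} (f : Fin k → ℝ) (q : ℝ) (B : Fin n → Bid k)

def bidPrecedes (a b : Fin n) : Prop :=
  density f q (B b) < density f q (B a) ∨ density f q (B a) = density f q (B b) ∧ a ≤ b

instance : Std.Antisymm (bidPrecedes f q B) where
  antisymm a b hab hba := by
    rcases hab with hab | ⟨hab, hab'⟩ <;> rcases hba with hba | ⟨hba, hba'⟩
    · exact absurd hab hba.not_gt
    · exact absurd hba hab.ne
    · exact absurd hab hba.ne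
    · exact le_antisymm hab' hba'

variable {f q B}

theorem mem_sortedBids {A : Finset (Fin n)} {i : Fin n} : i ∈ sortedBids f q B A ↔ i ∈ A := by
  simp [sortedBids]

theorem nodup_sortedBids (A : Finset (Fin n)) : (sortedBids f q B A).Nodup :=
  nodup_mergeSort.2 (sort_nodup _ _)

theorem pairwise_bidPrecedes_sortedBids (A : Finset (Fin n)) :
    (sortedBids f q B A).Pairwise (bidPrecedes f q B) := by
  have trans (a b c : Fin n) (hab : decide (density f q (B b) ≤ density f q (B a)))
      (hbc : decide (density f q (B c) ≤ density f q (B b))) :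
      decide (density f q (B c) ≤ density f q (B a)) := by
    simp only [decide_eq_true_eq] at *
    exact hbc.trans hab
  have total (a b : Fin n) : (decide (density f q (B b) ≤ density f q (B a)) ||
      decide (density f q (B a) ≤ density f q (B b))) := by
    simpa using le_total _ _
  rw [pairwise_iff_forall_sublist]
  intro a b hab
  have hle : density f q (B b) ≤ density f q (B a) := by
    simpa using pairwise_pair.1 ((pairwise_mergeSort trans total _).sublist hab)
  rcases hle.lt_or_eq with hlt | heq
  · exact Or.inl hlt
  refine Or.inr ⟨heq.symm, le_of_not_gt fun hba => hba.ne ?_⟩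
  -- stability of `mergeSort` keeps the index order among bids of equal density
  have hba_sort : [b, a] <+ A.sort (· ≤ ·) := by
    have hsub : [b, a] ⊆ A.sort (· ≤ ·) := by
      simp only [List.cons_subset, mem_sort, List.nil_subset, and_true]
      exact ⟨mem_sortedBids.1 (hab.subset (by simp)), mem_sortedBids.1 (hab.subset (by simp))⟩
    exact sublist_of_subperm_of_pairwise (subperm_of_subset (by simp [hba.ne]) hsub)
      (pairwise_pair.2 hba.le) (pairwise_sort _ _)
  have hba_sorted : [b, a] <+ sortedBids f q B A :=
    pair_sublist_mergeSort trans total (by simp [heq]) hba_sort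
  exact ((nodup_sortedBids A).eq_of_pair_sublist_of_pair_sublist hab hba_sorted).symm

theorem sortedBids_erase (A : Finset (Fin n)) (j : Fin n) :
    sortedBids f q B (A.erase j) = (sortedBids f q B A).erase j := by
  have hperm : sortedBids f q B (A.erase j) ~ (sortedBids f q B A).erase j := by
    rw [perm_ext_iff_of_nodup (nodup_sortedBids _) ((nodup_sortedBids A).erase j)]
    intro i
    rw [(nodup_sortedBids A).mem_erase_iff, mem_sortedBids, mem_sortedBids, mem_erase]
  exact hperm.eq_of_pairwise' (pairwise_bidPrecedes_sortedBids _)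
    ((pairwise_bidPrecedes_sortedBids A).sublist erase_sublist)

end SortedBids

section Greedy

variable {k n : ℕ} {o f : Fin k → ℝ} {s : Fin k → ℕ} {q : ℝ} {B : Fin n → Bid k}

variable (o s B) in
def grantStep (W : Finset (Fin n)) (j : Fin n) : Finset (Fin n) :=
  if (∀ i, (B j).1 i + ∑ j' ∈ W, (B j').1 i ≤ s i) ∧ ohat o (B j).1 ≤ (B j).2
  then insert j W else W

theorem grants_eq_foldl (A : Finset (Fin n)) :
    grants o f s q B A = (sortedBids f q B A).foldl (grantStep o s B) ∅ := rfl

theorem mem_foldl_grantStep_of_notMem {L : List (Fin n)} {X : Finset (Fin n)} {i : Fin n}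
    (hi : i ∉ L) : i ∈ L.foldl (grantStep o s B) X ↔ i ∈ X := by
  induction L generalizing X with
  | nil => rfl
  | cons a t ih =>
    rw [List.mem_cons, not_or] at hi
    rw [List.foldl_cons, ih hi.2, grantStep]
    split_ifs <;> simp [hi.1]

theorem ohat_le_of_mem_foldl_grantStep {L : List (Fin n)} {X : Finset (Fin n)} {i : Fin n}
    (hX : ∀ x ∈ X, ohat o (B x).1 ≤ (B x).2) (hi : i ∈ L.foldl (grantStep o s B) X) :
    ohat o (B i).1 ≤ (B i).2 := by
  induction L generalizing X with
  | nil => exact hX i hi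
  | cons a t ih =>
    refine ih (fun x hx => ?_) hi
    rw [grantStep] at hx
    split_ifs at hx with hgrant
    · obtain rfl | hx := mem_insert.1 hx
      exacts [hgrant.2, hX x hx]
    · exact hX x hx

theorem ohat_le_of_mem_grants {A : Finset (Fin n)} {i : Fin n}
    (hi : i ∈ grants o f s q B A) : ohat o (B i).1 ≤ (B i).2 :=
  ohat_le_of_mem_foldl_grantStep (by simp) hi

theorem mem_foldl_grantStep_append_cons_iff (P : List (Fin n)) {Q Q' : List (Fin n)} {i : Fin n}
    (hQ : i ∉ Q) (hQ' : i ∉ Q') (X : Finset (Fin n)) :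
    i ∈ (P ++ i :: Q).foldl (grantStep o s B) X ↔ i ∈ (P ++ i :: Q').foldl (grantStep o s B) X := by
  simp only [List.foldl_append, List.foldl_cons, mem_foldl_grantStep_of_notMem hQ,
    mem_foldl_grantStep_of_notMem hQ']

theorem mem_grants_erase_iff {A : Finset (Fin n)} {i j : Fin n} (hi : i ∈ A)
    (hji : density f q (B j) < density f q (B i)) :
    i ∈ grants o f s q B (A.erase j) ↔ i ∈ grants o f s q B A := by
  obtain ⟨P, Q, hPQ⟩ := List.append_of_mem (mem_sortedBids.2 hi : i ∈ sortedBids f q B A)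
  have hiQ : i ∉ Q := ((hPQ ▸ nodup_sortedBids A).of_append_right).notMem
  have hjP : j ∉ P := fun hjP => by
    have hpair := hPQ ▸ pairwise_bidPrecedes_sortedBids A
    rcases List.pairwise_append.1 hpair |>.2.2 j hjP i List.mem_cons_self with h | ⟨h, -⟩
    · exact h.not_gt hji
    · exact hji.ne h
  have hij : i ≠ j := fun h => hji.ne (h ▸ rfl)
  rw [grants_eq_foldl, grants_eq_foldl, sortedBids_erase, hPQ, List.erase_append_right _ hjP,
    List.erase_cons_tail (by simpa using hij)]
  exact mem_foldl_grantStep_append_cons_iff P (fun h => hiQ (List.mem_of_mem_erase h)) hiQ ∅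

theorem density_le_of_mem_competitorSet {i j : Fin n} (hi : i ∈ competitorSet o f s q B j) :
    density f q (B i) ≤ density f q (B j) := by
  obtain ⟨hi_grant, hi_lose⟩ := mem_sdiff.1 hi
  by_contra! hlt
  exact hi_lose ((mem_grants_erase_iff (mem_univ i) hlt).1 hi_grant)

theorem ecomp_le_density {j : Fin n} (hj : 0 ≤ density f q (B j)) :
    ecomp o f s q B j ≤ density f q (B j) := by
  rw [ecomp]
  split_ifs
  · exact sup'_le _ _ fun i hi => density_le_of_mem_competitorSet hi
  · exact hj

end Greedy

theorem grp_individually_rational_general {k n : ℕ}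
    (f o : Fin k → ℝ) (hf : ∀ i, 0 < f i)
    (s : Fin k → ℕ) (q : ℝ)
    (B : Fin n → Bid k) (hB : ∀ i, validBid (B i)) :
    (∀ j ∈ winners o f s q B,
        ohat o (B j).1 ≤ payment o f s q B j ∧ payment o f s q B j ≤ (B j).2) ∧
    (∀ j ∉ winners o f s q B, payment o f s q B j = 0) := by
  refine ⟨fun j hj => ?_, fun j hj => if_neg hj⟩
  set D := dhat f (B j).1 ^ q
  have hD : 0 < D := Real.rpow_pos_of_pos (dhat_pos hf (hB j).1) q
  have hres : eres o f q (B j) ≤ density f q (B j) :=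
    div_le_div_of_nonneg_right (ohat_le_of_mem_grants hj) hD.le
  have hcr : max (ecomp o f s q B j) (eres o f q (B j)) ≤ density f q (B j) :=
    max_le (ecomp_le_density (div_nonneg (hB j).2 hD.le)) hres
  rw [payment, if_pos hj]
  constructor
  · calc ohat o (B j).1 = eres o f q (B j) * D := (div_mul_cancel₀ _ hD.ne').symm
      _ ≤ max (ecomp o f s q B j) (eres o f q (B j)) * D := by gcongr; exact le_max_right _ _
  · calc max (ecomp o f s q B j) (eres o f q (B j)) * D ≤ density f q (B j) * D := by gcongr
      _ = (B j).2 := div_mul_cancel₀ _ hD.ne'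

/-- individual rationality and seller protection of the Greedy-RP
mechanism: every winner `j ∈ W(B)` pays a price `p_j` with `ô(d_j) ≤ p_j ≤ v_j`,
and every non-winner pays `p_j = 0`. -/
theorem grp_individually_rational {k n : ℕ} (hk : 1 ≤ k)
    (f o : Fin k → ℝ) (hf : ∀ i, 0 < f i) (ho : ∀ i, 0 ≤ o i)
    (s : Fin k → ℕ) (q : ℝ) (hq : 0 < q)
    (B : Fin n → Bid k) (hB : ∀ i, validBid (B i)) :
    (∀ j ∈ winners o f s q B,
        ohat o (B j).1 ≤ payment o f s q B j ∧ payment o f s q B j ≤ (B j).2) ∧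
    (∀ j ∉ winners o f s q B, payment o f s q B j = 0) :=
  grp_individually_rational_general f o hf s q B hB

end
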